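/- arXiv:2101.04148 — 6 statements merged into one kernel-verified Lean document; each statement's English description precedes it below -/
import Mathlib

section
/- For a positive integer k and a nonnegative integral vector S of length n, the class C_{m,n}(ke,S) of m×n convex (0,1)-matrices with all row sums equal to k and column sum vector S is nonempty if and only if there exists a row convex m×n (0,1)-matrix with all row sums equal to k and column sum vector S. -/
def ZeroOne {m n : ℕ} (A : Fin m → Fin n → ℕ) : Prop :=
  ∀ i j, A i j = 0 ∨ A i j = 1

def RowConvex {m n : ℕ} (A : Fin m → Fin n → ℕ) : Prop :=
  ∀ (i : Fin m) (j₁ j₂ j₃ : Fin n), j₁ ≤ j₂ → j₂ ≤ j₃ → A i j₁ = 1 → A i j₃ = 1 → A i j₂ = 1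

def ColConvex {m n : ℕ} (A : Fin m → Fin n → ℕ) : Prop :=
  ∀ (j : Fin n) (i₁ i₂ i₃ : Fin m), i₁ ≤ i₂ → i₂ ≤ i₃ → A i₁ j = 1 → A i₃ j = 1 → A i₂ j = 1

def MatConvex {m n : ℕ} (A : Fin m → Fin n → ℕ) : Prop :=
  RowConvex A ∧ ColConvex A


/-- `C_{m,n}(ke,S)` is nonempty iff there is a row convex matrix
in `A_{m,n}(ke,S)`. -/
theorem convex_class_const_row_sums_iff_row_convex (m n k : ℕ) (hk : 0 < k)
    (S : Fin n → ℕ) :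
    (∃ A : Fin m → Fin n → ℕ, ZeroOne A ∧ MatConvex A ∧
        (∀ i, (∑ j, A i j) = k) ∧ (∀ j, (∑ i, A i j) = S j)) ↔
      (∃ A : Fin m → Fin n → ℕ, ZeroOne A ∧ RowConvex A ∧
        (∀ i, (∑ j, A i j) = k) ∧ (∀ j, (∑ i, A i j) = S j)) := by
  constructor
  · rintro ⟨A, h1, ⟨h2, _⟩, h3, h4⟩
    exact ⟨A, h1, h2, h3, h4⟩
  · rintro ⟨A, hz, hrc, hrow, hcol⟩
    -- the set of ones in each row
    set T : Fin m → Finset (Fin n) := fun i => Finset.univ.filter (fun j => A i j = 1) with hT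
    have hcard : ∀ i, (T i).card = k := by
      intro i
      have : (∑ j, A i j) = (T i).card := by
        rw [hT, Finset.card_filter]
        refine Finset.sum_congr rfl (fun j _ => ?_)
        rcases hz i j with h | h <;> simp [h]
      rw [← this, hrow i]
    have hne : ∀ i, (T i).Nonempty := fun i =>
      Finset.card_pos.mp (by rw [hcard i]; exact hk)
    -- min of each row's ones
    set mn : Fin m → Fin n := fun i => (T i).min' (hne i) with hmn
    set mx : Fin m → Fin n := fun i => (T i).max' (hne i) with hmx
    have hmem : ∀ i j, A i j = 1 ↔ j ∈ T i := by
      intro i j; simp [hT]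
    have hIcc : ∀ i, T i = Finset.Icc (mn i) (mx i) := by
      intro i
      apply Finset.ext
      intro j
      constructor
      · intro hj
        exact Finset.mem_Icc.mpr ⟨Finset.min'_le _ _ hj, Finset.le_max' _ _ hj⟩
      · intro hj
        rcases Finset.mem_Icc.mp hj with ⟨h1, h2⟩
        exact (hmem i j).mp (hrc i (mn i) j (mx i) h1 h2
          ((hmem i _).mpr ((T i).min'_mem (hne i)))
          ((hmem i _).mpr ((T i).max'_mem (hne i))))
    have hle : ∀ i, mn i ≤ mx i := fun i => Finset.min'_le _ _ ((T i).max'_mem (hne i))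
    have hkey : ∀ i, (mx i : ℕ) + 1 = (mn i : ℕ) + k := by
      intro i
      have := hcard i
      rw [hIcc i, Fin.card_Icc] at this
      omega
    -- characterization of ones
    have hchar : ∀ i j, A i j = 1 ↔ ((mn i : ℕ) ≤ (j : ℕ) ∧ (j : ℕ) < (mn i : ℕ) + k) := by
      intro i j
      rw [hmem i j, hIcc i, Finset.mem_Icc]
      have := hkey i
      constructor
      · rintro ⟨h1, h2⟩
        exact ⟨h1, by have := (Fin.le_def.mp h2); omega⟩
      · rintro ⟨h1, h2⟩
        exact ⟨h1, Fin.le_def.mpr (by omega)⟩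
    -- sort rows by start index
    set σ : Equiv.Perm (Fin m) := Tuple.sort (fun i => ((mn i : ℕ))) with hσ
    have hmono : Monotone ((fun i => ((mn i : ℕ))) ∘ σ) := Tuple.monotone_sort _
    refine ⟨fun i j => A (σ i) j, fun i j => hz (σ i) j, ⟨fun i => hrc (σ i), ?_⟩,
      fun i => hrow (σ i), fun j => ?_⟩
    · intro j i₁ i₂ i₃ h12 h23 h1 h3
      rw [hchar] at h1 h3 ⊢
      have m12 : (mn (σ i₁) : ℕ) ≤ (mn (σ i₂) : ℕ) := hmono h12
      have m23 : (mn (σ i₂) : ℕ) ≤ (mn (σ i₃) : ℕ) := hmono h23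
      omega
    · rw [← hcol j]
      exact Equiv.sum_comp σ (fun i => A i j)
end

section
/- The set C_{m,n} of all m×n convex (0,1)-matrices, partially ordered entrywise, is a lattice: every pair of elements has a greatest lower bound and a least upper bound. -/
/-- the poset of `m×n` convex (0,1)-matrices under the entrywise order
is a lattice: every pair has a greatest lower bound and a least upper bound within
the convex (0,1)-matrices. -/
theorem convex_matrices_lattice (m n : ℕ) (C₁ C₂ : Fin m → Fin n → ℕ)
    (h₁ : ZeroOne C₁) (h₂ : ZeroOne C₂)
    (hc₁ : MatConvex C₁) (hc₂ : MatConvex C₂) :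
    (∃ M : Fin m → Fin n → ℕ, ZeroOne M ∧ MatConvex M ∧
      (∀ i j, M i j ≤ C₁ i j) ∧ (∀ i j, M i j ≤ C₂ i j) ∧
      (∀ D : Fin m → Fin n → ℕ, ZeroOne D → MatConvex D →
        (∀ i j, D i j ≤ C₁ i j) → (∀ i j, D i j ≤ C₂ i j) →
        ∀ i j, D i j ≤ M i j)) ∧
    (∃ J : Fin m → Fin n → ℕ, ZeroOne J ∧ MatConvex J ∧
      (∀ i j, C₁ i j ≤ J i j) ∧ (∀ i j, C₂ i j ≤ J i j) ∧
      (∀ D : Fin m → Fin n → ℕ, ZeroOne D → MatConvex D →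
        (∀ i j, C₁ i j ≤ D i j) → (∀ i j, C₂ i j ≤ D i j) →
        ∀ i j, J i j ≤ D i j)) := by
  classical
  constructor
  · -- meet: pointwise min
    refine ⟨fun i j => min (C₁ i j) (C₂ i j), ?_, ⟨?_, ?_⟩, ?_, ?_, ?_⟩
    · intro i j
      rcases h₁ i j with h | h <;> rcases h₂ i j with h' | h' <;> simp [h, h']
    · intro i j₁ j₂ j₃ hle hle' ha hb
      have ha' : min (C₁ i j₁) (C₂ i j₁) = 1 := ha
      have hb' : min (C₁ i j₃) (C₂ i j₃) = 1 := hb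
      have l1 := min_le_left (C₁ i j₁) (C₂ i j₁)
      have l2 := min_le_right (C₁ i j₁) (C₂ i j₁)
      have l3 := min_le_left (C₁ i j₃) (C₂ i j₃)
      have l4 := min_le_right (C₁ i j₃) (C₂ i j₃)
      have e1 : C₁ i j₂ = 1 := hc₁.1 i j₁ j₂ j₃ hle hle'
        (by rcases h₁ i j₁ with h | h <;> omega) (by rcases h₁ i j₃ with h | h <;> omega)
      have e2 : C₂ i j₂ = 1 := hc₂.1 i j₁ j₂ j₃ hle hle'
        (by rcases h₂ i j₁ with h | h <;> omega) (by rcases h₂ i j₃ with h | h <;> omega)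
      show min (C₁ i j₂) (C₂ i j₂) = 1
      rw [e1, e2]; exact min_self 1
    · intro j i₁ i₂ i₃ hle hle' ha hb
      have ha' : min (C₁ i₁ j) (C₂ i₁ j) = 1 := ha
      have hb' : min (C₁ i₃ j) (C₂ i₃ j) = 1 := hb
      have l1 := min_le_left (C₁ i₁ j) (C₂ i₁ j)
      have l2 := min_le_right (C₁ i₁ j) (C₂ i₁ j)
      have l3 := min_le_left (C₁ i₃ j) (C₂ i₃ j)
      have l4 := min_le_right (C₁ i₃ j) (C₂ i₃ j)
      have e1 : C₁ i₂ j = 1 := hc₁.2 j i₁ i₂ i₃ hle hle'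
        (by rcases h₁ i₁ j with h | h <;> omega) (by rcases h₁ i₃ j with h | h <;> omega)
      have e2 : C₂ i₂ j = 1 := hc₂.2 j i₁ i₂ i₃ hle hle'
        (by rcases h₂ i₁ j with h | h <;> omega) (by rcases h₂ i₃ j with h | h <;> omega)
      show min (C₁ i₂ j) (C₂ i₂ j) = 1
      rw [e1, e2]; exact min_self 1
    · intro i j; exact min_le_left _ _
    · intro i j; exact min_le_right _ _
    · intro D _ _ hd1 hd2 i j; exact le_min (hd1 i j) (hd2 i j)
  · -- join: pointwise "forced" entries
    let P : Fin m → Fin n → Prop := fun i j =>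
      ∀ D : Fin m → Fin n → ℕ, ZeroOne D → MatConvex D →
        (∀ i j, C₁ i j ≤ D i j) → (∀ i j, C₂ i j ≤ D i j) → D i j = 1
    refine ⟨fun i j => if P i j then 1 else 0, ?_, ⟨?_, ?_⟩, ?_, ?_, ?_⟩
    · intro i j
      by_cases h : P i j
      · right; exact if_pos h
      · left; exact if_neg h
    · intro i j₁ j₂ j₃ hle hle' ha hb
      have ha' : (if P i j₁ then 1 else 0) = 1 := ha
      have hb' : (if P i j₃ then 1 else 0) = 1 := hb
      have hp1 : P i j₁ := by by_contra h; rw [if_neg h] at ha'; omega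
      have hp3 : P i j₃ := by by_contra h; rw [if_neg h] at hb'; omega
      have hp2 : P i j₂ := fun D hD hDc hd1 hd2 =>
        hDc.1 i j₁ j₂ j₃ hle hle' (hp1 D hD hDc hd1 hd2) (hp3 D hD hDc hd1 hd2)
      show (if P i j₂ then 1 else 0) = 1
      exact if_pos hp2
    · intro j i₁ i₂ i₃ hle hle' ha hb
      have ha' : (if P i₁ j then 1 else 0) = 1 := ha
      have hb' : (if P i₃ j then 1 else 0) = 1 := hb
      have hp1 : P i₁ j := by by_contra h; rw [if_neg h] at ha'; omega
      have hp3 : P i₃ j := by by_contra h; rw [if_neg h] at hb'; omega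
      have hp2 : P i₂ j := fun D hD hDc hd1 hd2 =>
        hDc.2 j i₁ i₂ i₃ hle hle' (hp1 D hD hDc hd1 hd2) (hp3 D hD hDc hd1 hd2)
      show (if P i₂ j then 1 else 0) = 1
      exact if_pos hp2
    · intro i j
      show C₁ i j ≤ if P i j then 1 else 0
      rcases h₁ i j with h | h
      · simp [h]
      · have hp : P i j := by
          intro D hD hDc hd1 hd2
          have := hd1 i j
          rcases hD i j with h' | h' <;> omega
        rw [if_pos hp, h]
    · intro i j
      show C₂ i j ≤ if P i j then 1 else 0
      rcases h₂ i j with h | h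
      · simp [h]
      · have hp : P i j := by
          intro D hD hDc hd1 hd2
          have := hd2 i j
          rcases hD i j with h' | h' <;> omega
        rw [if_pos hp, h]
    · intro D hD hDc hd1 hd2 i j
      show (if P i j then 1 else 0) ≤ D i j
      by_cases h : P i j
      · rw [if_pos h]; exact (h D hD hDc hd1 hd2).ge
      · rw [if_neg h]; exact Nat.zero_le _
end

section
/- The lattice of m×n convex (0,1)-matrices under the entrywise order is not distributive in general: for m=1, n=3, taking C_1, C_2, C_3 to be the three 1×3 matrices with a single 1 in positions 1, 2, 3 respectively, one has C_1 ∨ (C_2 ∧ C_3) = (1,0,0) while (C_1 ∨ C_2) ∧ (C_1 ∨ C_3) = (1,1,0). -/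
/-- `J` is the join (least upper bound) of `A` and `B` in the poset of convex
(0,1)-matrices with the entrywise order. -/
def IsJoin {m n : ℕ} (A B J : Fin m → Fin n → ℕ) : Prop :=
  ZeroOne J ∧ MatConvex J ∧
  (∀ i j, A i j ≤ J i j) ∧ (∀ i j, B i j ≤ J i j) ∧
  (∀ D : Fin m → Fin n → ℕ, ZeroOne D → MatConvex D →
    (∀ i j, A i j ≤ D i j) → (∀ i j, B i j ≤ D i j) → ∀ i j, J i j ≤ D i j)

/-- the lattice of convex (0,1)-matrices need not be distributive:
for the `1×3` matrices `C₁=(1,0,0)`, `C₂=(0,1,0)`, `C₃=(0,0,1)` one has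
`C₁ ∨ (C₂ ∧ C₃) = (1,0,0)` while `(C₁ ∨ C₂) ∧ (C₁ ∨ C₃) = (1,1,0)`. -/
theorem convex_lattice_not_distributive
    (C₁ C₂ C₃ : Fin 1 → Fin 3 → ℕ)
    (h₁ : C₁ = fun (_ : Fin 1) (j : Fin 3) => if (j : ℕ) = 0 then (1 : ℕ) else 0)
    (h₂ : C₂ = fun (_ : Fin 1) (j : Fin 3) => if (j : ℕ) = 1 then (1 : ℕ) else 0)
    (h₃ : C₃ = fun (_ : Fin 1) (j : Fin 3) => if (j : ℕ) = 2 then (1 : ℕ) else 0)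
    (JL J₁₂ J₁₃ : Fin 1 → Fin 3 → ℕ)
    (hJL : IsJoin C₁ (fun i j => min (C₂ i j) (C₃ i j)) JL)
    (hJ₁₂ : IsJoin C₁ C₂ J₁₂) (hJ₁₃ : IsJoin C₁ C₃ J₁₃) :
    JL = (fun (_ : Fin 1) (j : Fin 3) => if (j : ℕ) = 0 then (1 : ℕ) else 0) ∧
    (fun i j => min (J₁₂ i j) (J₁₃ i j)) =
      (fun (_ : Fin 1) (j : Fin 3) => if (j : ℕ) ≤ 1 then (1 : ℕ) else 0) := by

  subst h₁ h₂ h₃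
  obtain ⟨hz, hc, ha, hb, hmin⟩ := hJL
  obtain ⟨hz2, hc2, ha2, hb2, hmin2⟩ := hJ₁₂
  obtain ⟨hz3, hc3, ha3, hb3, hmin3⟩ := hJ₁₃
  constructor
  · funext i j
    have hle := hmin (fun (_ : Fin 1) (j : Fin 3) => if (j : ℕ) = 0 then 1 else 0)
      (by unfold ZeroOne; decide) (by unfold MatConvex RowConvex ColConvex; decide) (fun i j => le_refl _) (by decide) i j
    exact le_antisymm hle (ha i j)
  · have h12 : ∀ i j, J₁₂ i j = if (j : ℕ) ≤ 1 then 1 else 0 := by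
      intro i j
      have hle := hmin2 (fun (_ : Fin 1) (j : Fin 3) => if (j : ℕ) ≤ 1 then 1 else 0)
        (by unfold ZeroOne; decide) (by unfold MatConvex RowConvex ColConvex; decide) (by decide) (by decide) i j
      fin_cases i; fin_cases j
      · exact le_antisymm (by simpa using hle) (by simpa using ha2 0 0)
      · exact le_antisymm (by simpa using hle) (by simpa using hb2 0 1)
      · simpa using Nat.le_zero.mp (by simpa using hle)
    have h13 : ∀ i j, J₁₃ i j = 1 := by
      intro i j
      have hle : ∀ j, J₁₃ i j ≤ 1 := fun j => hmin3 (fun _ _ => 1)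
        (by unfold ZeroOne; decide) (by unfold MatConvex RowConvex ColConvex; decide) (by decide) (by decide) i j
      have h0 : J₁₃ i 0 = 1 := le_antisymm (hle 0) (by simpa using ha3 i 0)
      have h2 : J₁₃ i 2 = 1 := le_antisymm (hle 2) (by simpa using hb3 i 2)
      fin_cases j
      · exact h0
      · exact hc3.1 i 0 1 2 (by decide) (by decide) h0 h2
      · exact h2
    funext i j
    simp only [h12, h13, min_def]
    split <;> simp
end

section
/- If C_1 and C_2 are m×n (0,1)-matrices in the same class A(R,S), both have all row sums equal and all column sums equal respectively determined by R and S, C_1 is convex, C_2 is obtained from C_1 by a single interchange (replacing a 2×2 submatrix equal to [[1,0],[0,1]] by [[0,1],[1,0]] or vice versa), all row and column sums of C_1 are at least 2, and C_2 is also convex, then in each of the four lines (two rows and two columns) modified by the interchange, the interval of 1's of C_2 is a 1-shift of the corresponding interval of C_1. -/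
/-- The set of column indices of the 1-entries in row `i` (the horizontal interval). -/
def rowInterval {m n : ℕ} (A : Fin m → Fin n → ℕ) (i : Fin m) : Set (Fin n) :=
  {j | A i j = 1}

/-- `I'` is a 1-shift of `I`: `I = {k,…,l}` and `I' = {k+1,…,l+1}` for some `k ≤ l`. -/
def IsOneShift {n : ℕ} (I I' : Set (Fin n)) : Prop :=
  ∃ k l : ℕ, k ≤ l ∧ I = {j : Fin n | k ≤ (j : ℕ) ∧ (j : ℕ) ≤ l} ∧
    I' = {j : Fin n | k + 1 ≤ (j : ℕ) ∧ (j : ℕ) ≤ l + 1}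

/-- The set of row indices of the 1-entries in column `j` (the vertical interval). -/
def colInterval {m n : ℕ} (A : Fin m → Fin n → ℕ) (j : Fin n) : Set (Fin m) :=
  {i | A i j = 1}

/-- `I` and `I'` form a 1-shift pair (in either direction). -/
def OneShiftPair {n : ℕ} (I I' : Set (Fin n)) : Prop :=
  IsOneShift I I' ∨ IsOneShift I' I

lemma shift_lemma {n : ℕ} (f g : Fin n → ℕ)
    (hf01 : ∀ r, f r = 0 ∨ f r = 1)
    (hfc : ∀ r₁ r₂ r₃ : Fin n, r₁ ≤ r₂ → r₂ ≤ r₃ → f r₁ = 1 → f r₃ = 1 → f r₂ = 1)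
    (hgc : ∀ r₁ r₂ r₃ : Fin n, r₁ ≤ r₂ → r₂ ≤ r₃ → g r₁ = 1 → g r₃ = 1 → g r₂ = 1)
    (p q : Fin n) (hpq : p < q)
    (hfp : f p = 1) (hfq : f q = 0) (hgp : g p = 0) (hgq : g q = 1)
    (hsame : ∀ r, r ≠ p → r ≠ q → g r = f r)
    (hex : ∃ r, r ≠ p ∧ f r = 1) :
    IsOneShift {r : Fin n | f r = 1} {r : Fin n | g r = 1} := by
  classical
  set F : Finset (Fin n) := Finset.univ.filter (fun r => f r = 1) with hF
  have hmemF : ∀ r, r ∈ F ↔ f r = 1 := by intro r; simp [hF]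
  have hne : F.Nonempty := ⟨p, (hmemF p).2 hfp⟩
  set a := F.min' hne with ha
  set b := F.max' hne with hb
  have hab : ∀ r, f r = 1 → a ≤ r ∧ r ≤ b := fun r hr =>
    ⟨F.min'_le r ((hmemF r).2 hr), F.le_max' r ((hmemF r).2 hr)⟩
  have hfa : f a = 1 := (hmemF a).1 (F.min'_mem hne)
  have hfb : f b = 1 := (hmemF b).1 (F.max'_mem hne)
  have hS : ∀ r, f r = 1 ↔ (a ≤ r ∧ r ≤ b) := by
    intro r
    exact ⟨hab r, fun ⟨h1, h2⟩ => hfc a r b h1 h2 hfa hfb⟩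
  have hpa : p = a := by
    by_contra hpa
    have hap : a < p := lt_of_le_of_ne (hab p hfp).1 (Ne.symm hpa)
    have hga : g a = 1 := by
      rw [hsame a (ne_of_lt hap) (ne_of_lt (lt_trans hap hpq))]; exact hfa
    have := hgc a p q (le_of_lt hap) (le_of_lt hpq) hga hgq
    omega
  have hlt : a < b := by
    obtain ⟨r, hrp, hr⟩ := hex
    have := hab r hr
    have : a < r := lt_of_le_of_ne this.1 (by rw [← hpa]; exact Ne.symm hrp)
    exact lt_of_lt_of_le this (hab r hr).2
  have hbq : b < q := by
    by_contra h
    push_neg at h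
    have : f q = 1 := (hS q).2 ⟨le_of_lt (hpa ▸ hpq : a < q), h⟩
    omega
  have hgb : g b = 1 := by
    rw [hsame b (by rw [← hpa] at hlt; exact (ne_of_lt hlt).symm ) (ne_of_lt hbq)]
    exact hfb
  have hq : (q : ℕ) = (b : ℕ) + 1 := by
    by_contra h
    have hbq' : (b : ℕ) + 1 < (q : ℕ) := by
      have := (Fin.lt_def.1 hbq); omega
    set r : Fin n := ⟨(b : ℕ) + 1, lt_trans hbq' q.isLt⟩ with hr
    have hgr : g r = 1 := hgc b r q (by simp [Fin.le_def, hr]) (by simp [Fin.le_def, hr]; omega) hgb hgq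
    have hrq : r ≠ q := by simp [hr, Fin.ext_iff]; omega
    have hrp : r ≠ p := by
      simp [hr, Fin.ext_iff, hpa]
      have := Fin.lt_def.1 hlt; omega
    have : f r = 1 := by rw [← hsame r hrp hrq]; exact hgr
    have := (hS r).1 this
    have := Fin.le_def.1 this.2
    simp [hr] at this
  refine ⟨(a : ℕ), (b : ℕ), le_of_lt (Fin.lt_def.1 hlt), ?_, ?_⟩
  · ext r
    simp only [Set.mem_setOf_eq, hS r, Fin.le_def]
  · ext r
    simp only [Set.mem_setOf_eq]
    constructor
    · intro hgr
      by_cases hrq : r = q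
      · subst hrq; constructor <;> omega
      · by_cases hrp : r = p
        · subst hrp; omega
        · have hfr : f r = 1 := by rw [← hsame r hrp hrq]; exact hgr
          have := (hS r).1 hfr
          have h1 := Fin.le_def.1 this.1
          have h2 := Fin.le_def.1 this.2
          have : a < r := lt_of_le_of_ne this.1 (by rw [← hpa]; exact fun hh => hrp hh.symm)
          have := Fin.lt_def.1 this
          omega
    · rintro ⟨h1, h2⟩
      by_cases hr : (r : ℕ) ≤ (b : ℕ)
      · have hfr : f r = 1 := (hS r).2 ⟨Fin.le_def.2 (by omega), Fin.le_def.2 hr⟩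
        have hrp : r ≠ p := by
          intro hh; subst hh
          rw [hpa] at h1
          omega
        have hrq : r ≠ q := by
          intro hh; subst hh; omega
        rw [hsame r hrp hrq]; exact hfr
      · have : (r : ℕ) = (b : ℕ) + 1 := by omega
        have : r = q := Fin.ext (by omega)
        subst this; exact hgq

lemma exists_other {n : ℕ} (f : Fin n → ℕ) (h01 : ∀ r, f r = 0 ∨ f r = 1)
    (hsum : 2 ≤ ∑ r, f r) (p : Fin n) (hp : f p = 1) :
    ∃ r, r ≠ p ∧ f r = 1 := by
  by_contra h
  push_neg at h
  have hz : ∀ r ∈ Finset.univ, r ≠ p → f r = 0 := by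
    intro r _ hr
    rcases h01 r with h0 | h1
    · exact h0
    · exact absurd h1 (h r hr)
  have := Finset.sum_eq_single_of_mem p (Finset.mem_univ p) (fun r hr h' => hz r hr h')
  omega

lemma hex_of {n : ℕ} (f : Fin n → ℕ) (h01 : ∀ r, f r = 0 ∨ f r = 1)
    (hsum : 2 ≤ ∑ r, f r) (p q : Fin n)
    (h : (f p = 1 ∧ f q = 0) ∨ (f p = 0 ∧ f q = 1)) :
    ∃ r, r ≠ p ∧ r ≠ q ∧ f r = 1 := by
  rcases h with ⟨h1, h2⟩ | ⟨h1, h2⟩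
  · obtain ⟨r, hr, hr1⟩ := exists_other f h01 hsum p h1
    exact ⟨r, hr, fun he => by subst he; omega, hr1⟩
  · obtain ⟨r, hr, hr1⟩ := exists_other f h01 hsum q h2
    exact ⟨r, fun he => by subst he; omega, hr, hr1⟩

/-- Packaged line lemma: handles both directions of the interchange on one line. -/
lemma line_lemma {n : ℕ} (f g : Fin n → ℕ)
    (hf01 : ∀ r, f r = 0 ∨ f r = 1) (hg01 : ∀ r, g r = 0 ∨ g r = 1)
    (hfc : ∀ r₁ r₂ r₃ : Fin n, r₁ ≤ r₂ → r₂ ≤ r₃ → f r₁ = 1 → f r₃ = 1 → f r₂ = 1)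
    (hgc : ∀ r₁ r₂ r₃ : Fin n, r₁ ≤ r₂ → r₂ ≤ r₃ → g r₁ = 1 → g r₃ = 1 → g r₂ = 1)
    (p q : Fin n) (hpq : p < q)
    (hpat : (f p = 1 ∧ f q = 0 ∧ g p = 0 ∧ g q = 1) ∨
            (f p = 0 ∧ f q = 1 ∧ g p = 1 ∧ g q = 0))
    (hsame : ∀ r, r ≠ p → r ≠ q → g r = f r)
    (hex : ∃ r, r ≠ p ∧ r ≠ q ∧ f r = 1) :
    IsOneShift {r : Fin n | f r = 1} {r : Fin n | g r = 1} ∨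
    IsOneShift {r : Fin n | g r = 1} {r : Fin n | f r = 1} := by
  obtain ⟨r, hrp, hrq, hr⟩ := hex
  rcases hpat with ⟨h1, h2, h3, h4⟩ | ⟨h1, h2, h3, h4⟩
  · exact Or.inl (shift_lemma f g hf01 hfc hgc p q hpq h1 h2 h3 h4 hsame ⟨r, hrp, hr⟩)
  · refine Or.inr (shift_lemma g f hg01 hgc hfc p q hpq h3 h4 h1 h2
      (fun s hsp hsq => (hsame s hsp hsq).symm) ⟨r, hrp, ?_⟩)
    rw [hsame r hrp hrq]; exact hr

/-- if a single interchange transforms a convex (0,1)-matrix `C₁`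
(all of whose line sums are at least 2) into a convex matrix `C₂`, then in each of
the four modified lines the interval of ones of `C₂` is a 1-shift of that of `C₁`. -/
theorem interchange_between_convex_gives_one_shifts (m n : ℕ)
    (C₁ C₂ : Fin m → Fin n → ℕ)
    (h₁ : ZeroOne C₁) (h₂ : ZeroOne C₂)
    (hc₁ : MatConvex C₁) (hc₂ : MatConvex C₂)
    (hrow : ∀ i, 2 ≤ ∑ j, C₁ i j) (hcol : ∀ j, 2 ≤ ∑ i, C₁ i j)
    (i i' : Fin m) (j j' : Fin n) (hi : i < i') (hj : j < j')
    (hpat : (C₁ i j = 1 ∧ C₁ i j' = 0 ∧ C₁ i' j = 0 ∧ C₁ i' j' = 1 ∧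
             C₂ i j = 0 ∧ C₂ i j' = 1 ∧ C₂ i' j = 1 ∧ C₂ i' j' = 0) ∨
            (C₁ i j = 0 ∧ C₁ i j' = 1 ∧ C₁ i' j = 1 ∧ C₁ i' j' = 0 ∧
             C₂ i j = 1 ∧ C₂ i j' = 0 ∧ C₂ i' j = 0 ∧ C₂ i' j' = 1))
    (hsame : ∀ a b, (a ≠ i ∧ a ≠ i') ∨ (b ≠ j ∧ b ≠ j') → C₂ a b = C₁ a b) :
    OneShiftPair (rowInterval C₁ i) (rowInterval C₂ i) ∧
    OneShiftPair (rowInterval C₁ i') (rowInterval C₂ i') ∧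
    OneShiftPair (colInterval C₁ j) (colInterval C₂ j) ∧
    OneShiftPair (colInterval C₁ j') (colInterval C₂ j') := by
  obtain ⟨hrc₁, hcc₁⟩ := hc₁
  obtain ⟨hrc₂, hcc₂⟩ := hc₂
  have pat : (C₁ i j = 1 ∧ C₁ i j' = 0) ∨ (C₁ i j = 0 ∧ C₁ i j' = 1) := by tauto
  have pat' : (C₁ i' j' = 1 ∧ C₁ i' j = 0) ∨ (C₁ i' j' = 0 ∧ C₁ i' j = 1) := by tauto
  refine ⟨?_, ?_, ?_, ?_⟩
  · exact line_lemma (C₁ i) (C₂ i) (h₁ i) (h₂ i)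
      (fun r₁ r₂ r₃ => hrc₁ i r₁ r₂ r₃) (fun r₁ r₂ r₃ => hrc₂ i r₁ r₂ r₃) j j' hj
      (by tauto)
      (fun b hb1 hb2 => hsame i b (Or.inr ⟨hb1, hb2⟩))
      (hex_of (C₁ i) (h₁ i) (hrow i) j j' pat)
  · exact line_lemma (C₁ i') (C₂ i') (h₁ i') (h₂ i')
      (fun r₁ r₂ r₃ => hrc₁ i' r₁ r₂ r₃) (fun r₁ r₂ r₃ => hrc₂ i' r₁ r₂ r₃) j j' hj
      (by tauto)
      (fun b hb1 hb2 => hsame i' b (Or.inr ⟨hb1, hb2⟩))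
      (hex_of (C₁ i') (h₁ i') (hrow i') j j' (by tauto))
  · exact line_lemma (fun a => C₁ a j) (fun a => C₂ a j)
      (fun a => h₁ a j) (fun a => h₂ a j)
      (fun r₁ r₂ r₃ => hcc₁ j r₁ r₂ r₃) (fun r₁ r₂ r₃ => hcc₂ j r₁ r₂ r₃) i i' hi
      (by tauto)
      (fun a ha1 ha2 => hsame a j (Or.inl ⟨ha1, ha2⟩))
      (hex_of (fun a => C₁ a j) (fun a => h₁ a j) (hcol j) i i' (by tauto))
  · exact line_lemma (fun a => C₁ a j') (fun a => C₂ a j')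
      (fun a => h₁ a j') (fun a => h₂ a j')
      (fun r₁ r₂ r₃ => hcc₁ j' r₁ r₂ r₃) (fun r₁ r₂ r₃ => hcc₂ j' r₁ r₂ r₃) i i' hi
      (by tauto)
      (fun a ha1 ha2 => hsame a j' (Or.inl ⟨ha1, ha2⟩))
      (hex_of (fun a => C₁ a j') (fun a => h₁ a j') (hcol j') i i' (by tauto))
end

section
/- Let A be an m×n convex (0,1)-matrix with no zero rows and no zero columns and with a 1 in position (1,1) that is a SE-source (every other 1 of A is reachable from (1,1) by a southeast rookwise path of row-adjacent or column-adjacent 1's). Then A is uniquely determined by its row sum vector R and column sum vector S: any other convex matrix with no zero lines, a SE-source at (1,1), row sums R, and column sums S equals A. -/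
/-- One southeast rookwise step between positions of ones of `A`: the target is a
1-entry immediately south or immediately east of the source. -/
def SEStep {m n : ℕ} (A : Fin m → Fin n → ℕ) (p q : Fin m × Fin n) : Prop :=
  A q.1 q.2 = 1 ∧
  (((q.1 : ℕ) = (p.1 : ℕ) + 1 ∧ q.2 = p.2) ∨ (q.1 = p.1 ∧ (q.2 : ℕ) = (p.2 : ℕ) + 1))

/-- `A` has a SE-source at position `(1,1)`: that entry is a 1 and every other 1 of
`A` is reachable from it by a southeast rookwise path of ones. -/
def HasSESourceAtTopLeft {m n : ℕ} (hm : 0 < m) (hn : 0 < n)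
    (A : Fin m → Fin n → ℕ) : Prop :=
  A ⟨0, hm⟩ ⟨0, hn⟩ = 1 ∧
  ∀ (i : Fin m) (j : Fin n), A i j = 1 →
    Relation.ReflTransGen (SEStep A) (⟨0, hm⟩, ⟨0, hn⟩) (i, j)

/-- Along a SE path from `p` to `q`, every row between the rows of `p` and `q`
contains a 1 in some column `≤ q.2`. -/
lemma se_reach {m n : ℕ} {B : Fin m → Fin n → ℕ} {p q : Fin m × Fin n}
    (hp : B p.1 p.2 = 1)
    (h : Relation.ReflTransGen (SEStep B) p q) :
    ∀ i : Fin m, p.1 ≤ i → i ≤ q.1 → ∃ c : Fin n, c ≤ q.2 ∧ B i c = 1 := by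
  induction h with
  | refl =>
    intro i h1 h2
    have hi : i = p.1 := le_antisymm h2 h1
    exact ⟨p.2, le_refl _, hi ▸ hp⟩
  | @tail b c hr hstep ih =>
    intro i h1 h2
    obtain ⟨hc1, hcase⟩ := hstep
    rcases hcase with ⟨hrow, hcol⟩ | ⟨hrow, hcol⟩
    · by_cases hib : i ≤ b.1
      · obtain ⟨d, hd, hBd⟩ := ih i h1 hib
        exact ⟨d, hcol ▸ hd, hBd⟩
      · have hval : (i : ℕ) = (c.1 : ℕ) := by
          have h3 : (b.1 : ℕ) < (i : ℕ) := Fin.lt_def.mp (not_le.mp hib)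
          have h4 : (i : ℕ) ≤ (c.1 : ℕ) := Fin.le_def.mp h2
          omega
        have hi : i = c.1 := Fin.ext hval
        exact ⟨c.2, le_refl _, hi ▸ hc1⟩
    · have hib : i ≤ b.1 := hrow ▸ h2
      obtain ⟨d, hd, hBd⟩ := ih i h1 hib
      refine ⟨d, ?_, hBd⟩
      have h5 : (d : ℕ) ≤ (b.2 : ℕ) := Fin.le_def.mp hd
      exact Fin.le_def.mpr (by omega)

/-- Key asymmetric contradiction: rows before `i` agree, columns before `j` in row
`i` agree, `A i j = 1` and `B i j = 0` is impossible. -/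
lemma key_contra {m n : ℕ} (hm : 0 < m) (hn : 0 < n)
    {A B : Fin m → Fin n → ℕ}
    (hA : ZeroOne A) (hB : ZeroOne B)
    (hBrc : RowConvex B)
    (hsB : HasSESourceAtTopLeft hm hn B)
    (hR : ∀ i, (∑ j, A i j) = (∑ j, B i j))
    (hS : ∀ j, (∑ i, A i j) = (∑ i, B i j))
    {i : Fin m} {j : Fin n}
    (hprev : ∀ i' : Fin m, (i' : ℕ) < (i : ℕ) → ∀ c, A i' c = B i' c)
    (hjmin : ∀ c : Fin n, (c : ℕ) < (j : ℕ) → A i c = B i c)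
    (h1 : A i j = 1) (h0 : B i j = 0) : False := by
  by_cases hex : ∃ c : Fin n, (c : ℕ) < (j : ℕ) ∧ B i c = 1
  · obtain ⟨c, hcj, hBc⟩ := hex
    have hright : ∀ c'' : Fin n, (j : ℕ) ≤ (c'' : ℕ) → B i c'' = 0 := by
      intro c'' hc''
      rcases hB i c'' with h | h
      · exact h
      · exfalso
        have hjc : B i j = 1 :=
          hBrc i c j c'' (Fin.le_def.mpr (le_of_lt hcj)) (Fin.le_def.mpr hc'') hBc h
        rw [h0] at hjc; exact absurd hjc (by norm_num)
    have hsum : (∑ c, B i c) < ∑ c, A i c := by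
      apply Finset.sum_lt_sum
      · intro x _
        rcases lt_trichotomy (x : ℕ) (j : ℕ) with h | h | h
        · rw [hjmin x h]
        · have hx : x = j := Fin.ext h
          rw [hx, h0, h1]; exact Nat.zero_le _
        · rw [hright x (le_of_lt h)]; exact Nat.zero_le _
      · exact ⟨j, Finset.mem_univ _, by rw [h0, h1]; norm_num⟩
    have := hR i; omega
  · push_neg at hex
    have h0' : ∀ c : Fin n, (c : ℕ) ≤ (j : ℕ) → B i c = 0 := by
      intro c hc
      rcases eq_or_lt_of_le hc with h | h
      · have hc' : c = j := Fin.ext h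
        rw [hc']; exact h0
      · rcases hB i c with hh | hh
        · exact hh
        · exact absurd hh (hex c h)
    have hbelow : ∀ i' : Fin m, (i : ℕ) ≤ (i' : ℕ) → B i' j = 0 := by
      intro i' hi'
      rcases hB i' j with hh | hh
      · exact hh
      · exfalso
        have hrtg := hsB.2 i' j hh
        obtain ⟨c, hc, hBc⟩ := se_reach hsB.1 hrtg i
          (Fin.le_def.mpr (Nat.zero_le _)) (Fin.le_def.mpr hi')
        rw [h0' c (Fin.le_def.mp hc)] at hBc
        exact absurd hBc (by norm_num)
    have hsum : (∑ i', B i' j) < ∑ i', A i' j := by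
      apply Finset.sum_lt_sum
      · intro x _
        rcases lt_or_ge (x : ℕ) (i : ℕ) with h | h
        · rw [hprev x h j]
        · rw [hbelow x h]; exact Nat.zero_le _
      · exact ⟨i, Finset.mem_univ _, by rw [hbelow i (le_refl _), h1]; norm_num⟩
    have := hS j; omega

/-- a convex (0,1)-matrix with no zero lines and a SE-source at `(1,1)`
is uniquely determined by its row and column sum vectors among such matrices. -/
theorem se_source_unique (m n : ℕ) (hm : 0 < m) (hn : 0 < n)
    (A B : Fin m → Fin n → ℕ)
    (hA : ZeroOne A) (hB : ZeroOne B)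
    (hcA : MatConvex A) (hcB : MatConvex B)
    (hArow : ∀ i, 1 ≤ ∑ j, A i j) (hAcol : ∀ j, 1 ≤ ∑ i, A i j)
    (hBrow : ∀ i, 1 ≤ ∑ j, B i j) (hBcol : ∀ j, 1 ≤ ∑ i, B i j)
    (hsA : HasSESourceAtTopLeft hm hn A) (hsB : HasSESourceAtTopLeft hm hn B)
    (hR : ∀ i, (∑ j, A i j) = (∑ j, B i j))
    (hS : ∀ j, (∑ i, A i j) = (∑ i, B i j)) :
    A = B := by
  have rows : ∀ k, ∀ i : Fin m, (i : ℕ) = k → ∀ j, A i j = B i j := by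
    intro k
    induction k using Nat.strong_induction_on with
    | _ k ih =>
      intro i hik j
      have hprev : ∀ i' : Fin m, (i' : ℕ) < (i : ℕ) → ∀ c, A i' c = B i' c := by
        intro i' h c
        exact ih (i' : ℕ) (hik ▸ h) i' rfl c
      by_contra hne
      have hsne : (Finset.univ.filter (fun c : Fin n => A i c ≠ B i c)).Nonempty :=
        ⟨j, by simp [hne]⟩
      set c0 := (Finset.univ.filter (fun c : Fin n => A i c ≠ B i c)).min' hsne with hc0
      have hc0mem := Finset.min'_mem _ hsne
      have hc0ne : A i c0 ≠ B i c0 := by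
        have := Finset.mem_filter.mp hc0mem
        exact this.2
      have hc0min : ∀ c : Fin n, (c : ℕ) < (c0 : ℕ) → A i c = B i c := by
        intro c hc
        by_contra h
        have hle : c0 ≤ c := Finset.min'_le _ _ (by simp [h])
        exact absurd hc (not_lt.mpr (Fin.le_def.mp hle))
      rcases hA i c0 with hA0 | hA1 <;> rcases hB i c0 with hB0 | hB1
      · exact hc0ne (by rw [hA0, hB0])
      · exact key_contra hm hn hB hA hcA.1 hsA (fun i => (hR i).symm) (fun j => (hS j).symm)
          (fun i' h c => (hprev i' h c).symm) (fun c h => (hc0min c h).symm) hB1 hA0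
      · exact key_contra hm hn hA hB hcB.1 hsB hR hS hprev hc0min hA1 hB0
      · exact hc0ne (by rw [hA1, hB1])
  funext i j
  exact rows (i : ℕ) i rfl j
end

section
/- Let A be an m×n polyomino (a connected convex (0,1)-matrix with no zero rows or columns). Then the diagram of A—the set of positions not weakly east of a 1 in its row and not weakly south of a 1 in its column, i.e., positions (i,j) such that row i has no 1 in columns 1..j and column j has no 1 in rows 1..i—is the set of positions of a Ferrers array (left-justified, with weakly decreasing row lengths). Moreover, the diagram of A is empty if and only if A has a 1 in position (1,1). -/
/-- Two positions of ones of `A` are rook-adjacent: both entries are 1 and the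
positions differ by exactly one in exactly one coordinate. -/
def RookAdj {m n : ℕ} (A : Fin m → Fin n → ℕ) (p q : Fin m × Fin n) : Prop :=
  A p.1 p.2 = 1 ∧ A q.1 q.2 = 1 ∧
  ((p.1 = q.1 ∧ ((p.2 : ℕ) + 1 = (q.2 : ℕ) ∨ (q.2 : ℕ) + 1 = (p.2 : ℕ))) ∨
   (p.2 = q.2 ∧ ((p.1 : ℕ) + 1 = (q.1 : ℕ) ∨ (q.1 : ℕ) + 1 = (p.1 : ℕ))))

/-- `A` is a polyomino: a convex (0,1)-matrix with no zero rows or columns in which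
every pair of ones is joined by a rookwise path of ones. -/
def IsPolyomino {m n : ℕ} (A : Fin m → Fin n → ℕ) : Prop :=
  ZeroOne A ∧ MatConvex A ∧
  (∀ i, ∃ j, A i j = 1) ∧ (∀ j, ∃ i, A i j = 1) ∧
  (∀ (i i' : Fin m) (j j' : Fin n), A i j = 1 → A i' j' = 1 →
    Relation.ReflTransGen (RookAdj A) (i, j) (i', j'))

/-- `(i,j)` belongs to the diagram of `A`: row `i` has no 1 in columns `1..j` and
column `j` has no 1 in rows `1..i`. -/
def InDiagram {m n : ℕ} (A : Fin m → Fin n → ℕ) (i : Fin m) (j : Fin n) : Prop :=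
  (∀ j' : Fin n, j' ≤ j → A i j' = 0) ∧ (∀ i' : Fin m, i' ≤ i → A i' j = 0)

lemma diagram_key {m n : ℕ} (A : Fin m → Fin n → ℕ) (hA : IsPolyomino A)
    (i : Fin m) (j : Fin n) (hd : InDiagram A i j) :
    ∀ i' : Fin m, i' ≤ i → ∀ j' : Fin n, j' ≤ j → A i' j' = 0 := by
  obtain ⟨h01, ⟨hrc, hcc⟩, hrow, hcol, hconn⟩ := hA
  intro i' hi' j' hj'
  by_contra h0
  have h1 : A i' j' = 1 := (h01 i' j').resolve_left h0
  have hjlt : (j' : ℕ) < (j : ℕ) := by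
    rcases lt_or_eq_of_le hj' with h | h
    · exact h
    · rw [h] at h1; rw [hd.2 i' hi'] at h1; exact absurd h1 (by norm_num)
  have hilt : (i' : ℕ) < (i : ℕ) := by
    rcases lt_or_eq_of_le hi' with h | h
    · exact h
    · rw [h] at h1; rw [hd.1 j' hj'] at h1; exact absurd h1 (by norm_num)
  obtain ⟨i₂, h₂⟩ := hcol j
  have hQ : ∀ p : Fin m × Fin n, Relation.ReflTransGen (RookAdj A) (i', j') p →
      (p.1 : ℕ) < (i : ℕ) ∧ (p.2 : ℕ) < (j : ℕ) := by
    intro p hp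
    induction hp with
    | refl => exact ⟨hilt, hjlt⟩
    | tail _ step ih =>
      rename_i b c _
      obtain ⟨hb1, hc1, hcase⟩ := step
      rcases hcase with ⟨hr, hor⟩ | ⟨hc, hor⟩
      · refine ⟨hr ▸ ih.1, ?_⟩
        rcases hor with h | h
        · -- c.2 = b.2 + 1 ≤ j
          have hle : (c.2 : ℕ) ≤ (j : ℕ) := by omega
          rcases lt_or_eq_of_le hle with h' | h'
          · exact h'
          · exfalso
            have : c.2 = j := Fin.ext h'
            rw [this] at hc1
            have : A c.1 j = 0 := hd.2 c.1 (by rw [Fin.le_def]; omega)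
            omega
        · omega
      · refine ⟨?_, hc ▸ ih.2⟩
        rcases hor with h | h
        · have hle : (c.1 : ℕ) ≤ (i : ℕ) := by omega
          rcases lt_or_eq_of_le hle with h' | h'
          · exact h'
          · exfalso
            have hci : c.1 = i := Fin.ext h'
            rw [hci] at hc1
            have hc2j : (c.2 : ℕ) < (j : ℕ) := hc ▸ ih.2
            have : A i c.2 = 0 := hd.1 c.2 (by rw [Fin.le_def]; omega)
            omega
        · omega
  have := hQ (i₂, j) (hconn i' i₂ j' j h1 h₂)
  exact lt_irrefl _ this.2

/-- the diagram of a polyomino is a Ferrers array (left-justified with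
weakly decreasing row lengths), and it is empty iff the polyomino has a 1 in
position `(1,1)`. -/
theorem polyomino_diagram_ferrers (m n : ℕ) (hm : 0 < m) (hn : 0 < n)
    (A : Fin m → Fin n → ℕ) (hA : IsPolyomino A) :
    (∀ (i : Fin m) (j j' : Fin n), j' ≤ j → InDiagram A i j → InDiagram A i j') ∧
    (∀ (i i' : Fin m) (j : Fin n), i' ≤ i → InDiagram A i j → InDiagram A i' j) ∧
    ((∀ i j, ¬ InDiagram A i j) ↔ A ⟨0, hm⟩ ⟨0, hn⟩ = 1) := by
  refine ⟨?_, ?_, ?_, ?_⟩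
  · intro i j j' hj hd
    exact ⟨fun j'' hj'' => diagram_key A hA i j hd i le_rfl j'' (le_trans hj'' hj),
           fun i'' hi'' => diagram_key A hA i j hd i'' hi'' j' hj⟩
  · intro i i' j hi hd
    exact ⟨fun j'' hj'' => diagram_key A hA i j hd i' hi j'' hj'',
           fun i'' hi'' => diagram_key A hA i j hd i'' (le_trans hi'' hi) j le_rfl⟩
  · -- forward direction
    intro H
    by_contra h
    have h0 : A ⟨0, hm⟩ ⟨0, hn⟩ = 0 := (hA.1 _ _).resolve_right h
    obtain ⟨c₀, hc₀⟩ := hA.2.2.1 ⟨0, hm⟩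
    have hP : ∃ k : ℕ, ∃ hk : k < n, A ⟨0, hm⟩ ⟨k, hk⟩ = 1 := ⟨c₀, c₀.isLt, by
      convert hc₀ using 2⟩
    classical
    obtain ⟨hk, hAk⟩ := Nat.find_spec hP
    have hkpos : 0 < Nat.find hP := by
      rcases Nat.eq_zero_or_pos (Nat.find hP) with h' | h'
      · obtain ⟨h0n, hA0⟩ := (Nat.find_eq_zero hP).mp h'
        exact absurd (show A ⟨0, hm⟩ ⟨0, hn⟩ = 1 from hA0) (by rw [h0]; norm_num)
      · exact h'
    have hjlt : Nat.find hP - 1 < n := by omega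
    have hrow0 : ∀ j'' : Fin n, (j'' : ℕ) < Nat.find hP → A ⟨0, hm⟩ j'' = 0 := by
      intro j'' hj''
      rcases hA.1 ⟨0, hm⟩ j'' with h' | h'
      · exact h'
      · exact absurd h' (by
          intro hh
          exact Nat.find_min hP hj'' ⟨j''.isLt, by convert hh using 2⟩)
    refine H ⟨0, hm⟩ ⟨Nat.find hP - 1, hjlt⟩ ⟨?_, ?_⟩
    · intro j'' hj''
      exact hrow0 j'' (by rw [Fin.le_def] at hj''; simp at hj''; omega)
    · intro i'' hi''
      have : i'' = ⟨0, hm⟩ := by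
        rw [Fin.le_def] at hi''; exact Fin.ext (by simpa using hi'')
      rw [this]
      exact hrow0 _ (by simp; omega)
  · -- backward direction
    intro h1 i j hd
    have := diagram_key A hA i j hd ⟨0, hm⟩ (by rw [Fin.le_def]; exact Nat.zero_le _)
      ⟨0, hn⟩ (by rw [Fin.le_def]; exact Nat.zero_le _)
    rw [h1] at this
    exact one_ne_zero this
end
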